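/- arXiv:1506.00564 — 2 statements merged into one kernel-verified Lean document; each statement's English description precedes it below -/
import Mathlib

section
/- Let X = UΣV* be a (reduced) singular value decomposition of X with U having orthonormal columns, Σ invertible diagonal, V having orthonormal columns. If A = Y V Σ⁻¹ U* and Ã = U* A U, and if w is an eigenvector of Ã with eigenvalue λ ≠ 0, then ψ = Y V Σ⁻¹ w satisfies A ψ = λ ψ; i.e., the DMD mode ψ is an eigenvector of A with the same eigenvalue, provided ψ ≠ 0. -/
open Matrix

/-! With `B = Y V Σ⁻¹`, we have `A = B Uᴴ` and, as `Uᴴ U = 1`, `Ã = Uᴴ B`. An eigenvector `w` of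
`Uᴴ B` is mapped by `B` to a solution of `(B Uᴴ) (B w) = λ (B w)`: the DMD mode. -/

theorem Matrix.mul_mulVec_mulVec_eq_smul {m n R : Type*} [Fintype m] [Fintype n]
    [CommSemiring R] (B : Matrix m n R) (C : Matrix n m R) {c : R} {w : n → R}
    (hw : (C * B) *ᵥ w = c • w) :
    (B * C) *ᵥ (B *ᵥ w) = c • (B *ᵥ w) := by
  rw [mulVec_mulVec, Matrix.mul_assoc, ← mulVec_mulVec, hw, mulVec_smul]

theorem stmt_2_general (N K K' : ℕ)
    (Y : Matrix (Fin N) (Fin K') ℂ)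
    (U : Matrix (Fin N) (Fin K) ℂ) (S : Matrix (Fin K) (Fin K) ℂ)
    (V : Matrix (Fin K') (Fin K) ℂ)
    (hU : Uᴴ * U = 1)
    (A : Matrix (Fin N) (Fin N) ℂ) (hA : A = Y * V * S⁻¹ * Uᴴ)
    (At : Matrix (Fin K) (Fin K) ℂ) (hAt : At = Uᴴ * A * U)
    (lam : ℂ)
    (w : Fin K → ℂ) (hw : At.mulVec w = lam • w)
    (ψ : Fin N → ℂ) (hψdef : ψ = (Y * V * S⁻¹).mulVec w) :
    A.mulVec ψ = lam • ψ := by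
  have hAt' : At = Uᴴ * (Y * V * S⁻¹) := by
    rw [hAt, hA]
    simp only [Matrix.mul_assoc, hU, Matrix.mul_one]
  rw [hAt'] at hw
  rw [hA, hψdef]
  exact mul_mulVec_mulVec_eq_smul _ _ hw

/-- given a reduced SVD `X = U Σ V*` with `Σ` invertible diagonal,
`A = Y V Σ⁻¹ U*`, `Ã = U* A U`, if `Ã w = λ w` with `λ ≠ 0` then the DMD mode
`ψ = Y V Σ⁻¹ w` (assumed nonzero) satisfies `A ψ = λ ψ`. -/
theorem stmt_2 (N K K' : ℕ)
    (X Y : Matrix (Fin N) (Fin K') ℂ)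
    (U : Matrix (Fin N) (Fin K) ℂ) (S : Matrix (Fin K) (Fin K) ℂ)
    (V : Matrix (Fin K') (Fin K) ℂ)
    (hU : Uᴴ * U = 1) (hV : Vᴴ * V = 1)
    (hSdiag : S.IsDiag) (hSinv : IsUnit S)
    (hX : X = U * S * Vᴴ)
    (A : Matrix (Fin N) (Fin N) ℂ) (hA : A = Y * V * S⁻¹ * Uᴴ)
    (At : Matrix (Fin K) (Fin K) ℂ) (hAt : At = Uᴴ * A * U)
    (lam : ℂ) (hlam : lam ≠ 0)
    (w : Fin K → ℂ) (hw : At.mulVec w = lam • w)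
    (ψ : Fin N → ℂ) (hψdef : ψ = (Y * V * S⁻¹).mulVec w) (hψ : ψ ≠ 0) :
    A.mulVec ψ = lam • ψ :=
  stmt_2_general N K K' Y U S V hU A hA At hAt lam w hw ψ hψdef
end

section
/- With notation as in the exact DMD algorithm (X = UΣV*, A = Y V Σ⁻¹ U*, Ã = U* A U = U* Y V Σ⁻¹), if the column space of Y is contained in the column space of X, then the nonzero eigenvalues of A coincide with the nonzero eigenvalues of Ã. -/
/-! With `B = Y V Σ⁻¹` we have `A = B U*` and `Ã = U* B`, and for any rectangular `B`, `C` the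
products `B C` and `C B` have the same nonzero eigenvalues. -/

open Matrix

namespace Matrix

variable {m n R : Type*} [Fintype m] [Fintype n] [CommRing R] [NoZeroDivisors R]

/-- The eigenvector of `C * B` is `C v`, nonzero because `B (C v) = μ v ≠ 0`. -/
theorem exists_mulVec_eq_smul_of_mul_comm (B : Matrix m n R) (C : Matrix n m R) {μ : R}
    (hμ : μ ≠ 0) (h : ∃ v : m → R, v ≠ 0 ∧ (B * C) *ᵥ v = μ • v) :
    ∃ w : n → R, w ≠ 0 ∧ (C * B) *ᵥ w = μ • w := by
  obtain ⟨v, hv0, hv⟩ := h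
  refine ⟨C *ᵥ v, fun hCv => hv0 ?_, ?_⟩
  · have hμv : μ • v = 0 := by rw [← hv, ← mulVec_mulVec, hCv, mulVec_zero]
    exact (smul_eq_zero.mp hμv).resolve_left hμ
  · rw [mulVec_mulVec, Matrix.mul_assoc, ← mulVec_mulVec, hv, mulVec_smul]

theorem exists_mulVec_eq_smul_mul_comm (B : Matrix m n R) (C : Matrix n m R) {μ : R}
    (hμ : μ ≠ 0) :
    (∃ v : m → R, v ≠ 0 ∧ (B * C) *ᵥ v = μ • v) ↔
      ∃ w : n → R, w ≠ 0 ∧ (C * B) *ᵥ w = μ • w :=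
  ⟨exists_mulVec_eq_smul_of_mul_comm B C hμ, exists_mulVec_eq_smul_of_mul_comm C B hμ⟩

end Matrix

theorem stmt_3_general (N K K' : ℕ)
    (Y : Matrix (Fin N) (Fin K') ℂ)
    (U : Matrix (Fin N) (Fin K) ℂ) (S : Matrix (Fin K) (Fin K) ℂ)
    (V : Matrix (Fin K') (Fin K) ℂ)
    (A : Matrix (Fin N) (Fin N) ℂ) (hA : A = Y * V * S⁻¹ * Uᴴ)
    (At : Matrix (Fin K) (Fin K) ℂ) (hAt : At = Uᴴ * Y * V * S⁻¹) :
    ∀ μ : ℂ, μ ≠ 0 →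
      ((∃ v : Fin N → ℂ, v ≠ 0 ∧ A.mulVec v = μ • v) ↔
       (∃ w : Fin K → ℂ, w ≠ 0 ∧ At.mulVec w = μ • w)) := by
  intro μ hμ
  have hAt' : At = Uᴴ * (Y * V * S⁻¹) := by simp only [hAt, Matrix.mul_assoc]
  rw [hA, hAt']
  exact exists_mulVec_eq_smul_mul_comm _ _ hμ

/-- with `X = U Σ V*` a reduced SVD, `A = Y V Σ⁻¹ U*`,
`Ã = U* Y V Σ⁻¹`, if the column space of `Y` is contained in the column space
of `X`, then the nonzero eigenvalues of `A` coincide with those of `Ã`. -/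
theorem stmt_3 (N K K' : ℕ)
    (X Y : Matrix (Fin N) (Fin K') ℂ)
    (U : Matrix (Fin N) (Fin K) ℂ) (S : Matrix (Fin K) (Fin K) ℂ)
    (V : Matrix (Fin K') (Fin K) ℂ)
    (hU : Uᴴ * U = 1) (hV : Vᴴ * V = 1)
    (hSdiag : S.IsDiag) (hSinv : IsUnit S)
    (hX : X = U * S * Vᴴ)
    (A : Matrix (Fin N) (Fin N) ℂ) (hA : A = Y * V * S⁻¹ * Uᴴ)
    (At : Matrix (Fin K) (Fin K) ℂ) (hAt : At = Uᴴ * Y * V * S⁻¹)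
    (hcol : ∀ j : Fin K', (fun i => Y i j) ∈
      Submodule.span ℂ (Set.range fun j' : Fin K' => (fun i => X i j'))) :
    ∀ μ : ℂ, μ ≠ 0 →
      ((∃ v : Fin N → ℂ, v ≠ 0 ∧ A.mulVec v = μ • v) ↔
       (∃ w : Fin K → ℂ, w ≠ 0 ∧ At.mulVec w = μ • w)) :=
  stmt_3_general N K K' Y U S V A hA At hAt
end
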